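/- arXiv:2308.11435 — 3 statements merged into one kernel-verified Lean document; each statement's English description precedes it below -/
import Mathlib

section
/- Let m be a probability measure on ℝⁿ and H = L²_m(ℝⁿ,ℝⁿ). Define the operator (𝒫(s)X)_x = P(s) X_x + Γ(s) X̄ where X̄ is the m-mean of X, P solves the Riccati equation P' + PF + F*P − P G N⁻¹ G* P + M + M̄ = 0, P(T) = M_T + M̄_T, and Γ solves the Riccati equation Γ' + Γ(F+F̄−GN⁻¹G*P) + (F*+F̄*−PGN⁻¹G*)Γ − ΓGN⁻¹G*Γ + M̄_S + PF̄ + F̄*P = 0, Γ(T) = M̄_S(T). Then 𝒫(s) solves the operator Riccati equation 𝒫' + 𝒫ℱ + ℱ*𝒫 − 𝒫GN⁻¹G*𝒫 + ℳ = 0 with 𝒫(T) = ℳ_T, where (ℱ(s)X)_x = F(s)X_x + F̄(s)X̄, (ℳ(s)X)_x = (M(s)+M̄(s))X_x + M̄_S(s)X̄, and (ℳ_T X)_x = (M_T+M̄_T)X_x + M̄_S(T)X̄, the equation holding in the weak sense (𝒫'(s)X, Y)_H + (ℱ(s)X, 𝒫(s)Y)_H + (ℱ(s)Y, 𝒫(s)X)_H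 − (N⁻¹(s)G*(s)𝒫(s)X, G*(s)𝒫(s)Y)_U + (ℳ(s)X, Y)_H = 0 for all X, Y ∈ H. -/
open MeasureTheory ContinuousLinearMap
open scoped RealInnerProductSpace

local postfix:1024 "†" => ContinuousLinearMap.adjoint

/-! All operators involved are mean-field operators `X ↦ A X_x + B X̄`. Tested against `Y` in
`L²_m`, the composite of such an operator `(A, B)` with the adjoint of `(C, D)` is again one,
namely `(C* A, C* B + D* (A + B))`, because `m` is a probability measure. So the left side of
the weak equation is the weak form of a single mean-field operator, whose local part is the
Riccati expression for `P` and whose mean part is the Riccati expression for `Γ`. -/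

theorem MeasureTheory.MemLp.integrable_inner {α E : Type*} [MeasurableSpace α] {μ : Measure α}
    [NormedAddCommGroup E] [InnerProductSpace ℝ E] {f g : α → E}
    (hf : MemLp f 2 μ) (hg : MemLp g 2 μ) : Integrable (fun x => ⟪f x, g x⟫) μ := by
  refine (L2.integrable_inner (𝕜 := ℝ) (hf.toLp f) (hg.toLp g)).congr ?_
  filter_upwards [hf.coeFn_toLp, hg.coeFn_toLp] with x hfx hgx
  rw [hfx, hgx]

section MeanField

variable {α E F : Type*} [MeasurableSpace α] {μ : Measure α}
  [NormedAddCommGroup E] [InnerProductSpace ℝ E] [NormedAddCommGroup F] [InnerProductSpace ℝ F]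

theorem memLp_meanField [IsFiniteMeasure μ] (A B : E →L[ℝ] F) {X : α → E}
    (hX : MemLp X 2 μ) : MemLp (fun x => A (X x) + B (∫ y, X y ∂μ)) 2 μ :=
  (A.comp_memLp' hX).add (memLp_const _)

theorem integral_inner_meanField_add [IsFiniteMeasure μ] (A₁ B₁ A₂ B₂ : E →L[ℝ] F)
    {X : α → E} {Y : α → F} (hX : MemLp X 2 μ) (hY : MemLp Y 2 μ) :
    (∫ x, ⟪A₁ (X x) + B₁ (∫ y, X y ∂μ), Y x⟫ ∂μ) + ∫ x, ⟪A₂ (X x) + B₂ (∫ y, X y ∂μ), Y x⟫ ∂μ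
      = ∫ x, ⟪(A₁ + A₂) (X x) + (B₁ + B₂) (∫ y, X y ∂μ), Y x⟫ ∂μ := by
  rw [← integral_add ((memLp_meanField A₁ B₁ hX).integrable_inner hY)
    ((memLp_meanField A₂ B₂ hX).integrable_inner hY)]
  congr 1 with x
  simp only [add_apply, inner_add_left]
  ring

theorem integral_inner_meanField_sub [IsFiniteMeasure μ] (A₁ B₁ A₂ B₂ : E →L[ℝ] F)
    {X : α → E} {Y : α → F} (hX : MemLp X 2 μ) (hY : MemLp Y 2 μ) :
    (∫ x, ⟪A₁ (X x) + B₁ (∫ y, X y ∂μ), Y x⟫ ∂μ) - ∫ x, ⟪A₂ (X x) + B₂ (∫ y, X y ∂μ), Y x⟫ ∂μ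
      = ∫ x, ⟪(A₁ - A₂) (X x) + (B₁ - B₂) (∫ y, X y ∂μ), Y x⟫ ∂μ := by
  rw [← integral_sub ((memLp_meanField A₁ B₁ hX).integrable_inner hY)
    ((memLp_meanField A₂ B₂ hX).integrable_inner hY)]
  congr 1 with x
  simp only [sub_apply, inner_add_left, inner_sub_left]
  ring

variable [CompleteSpace E] [CompleteSpace F]

theorem integral_inner_add_const_left {g Y : α → E}
    (hgY : Integrable (fun x => ⟪g x, Y x⟫) μ) (hY : Integrable Y μ) (c : E) :
    ∫ x, ⟪g x + c, Y x⟫ ∂μ = (∫ x, ⟪g x, Y x⟫ ∂μ) + ⟪c, ∫ x, Y x ∂μ⟫ := by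
  simp_rw [inner_add_left]
  rw [integral_add hgY (hY.const_inner c), integral_inner hY c]

theorem integral_meanField [IsProbabilityMeasure μ] (A B : E →L[ℝ] F) {X : α → E}
    (hX : Integrable X μ) :
    ∫ x, A (X x) + B (∫ y, X y ∂μ) ∂μ = (A + B) (∫ y, X y ∂μ) := by
  rw [integral_add (A.integrable_comp hX) (integrable_const _), A.integral_comp_comm hX,
    integral_const, probReal_univ, one_smul, add_apply]

theorem integral_inner_meanField_eq_adjoint [IsFiniteMeasure μ] (C D : E →L[ℝ] F)
    {f : α → F} {Y : α → E} (hf : MemLp f 2 μ) (hY : MemLp Y 2 μ) :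
    ∫ x, ⟪f x, C (Y x) + D (∫ y, Y y ∂μ)⟫ ∂μ
      = ∫ x, ⟪C† (f x) + D† (∫ y, f y ∂μ), Y x⟫ ∂μ := by
  have hfi := hf.integrable one_le_two
  have hYi := hY.integrable one_le_two
  have hCfY : Integrable (fun x => ⟪C† (f x), Y x⟫) μ :=
    (C†.comp_memLp' hf).integrable_inner hY
  calc ∫ x, ⟪f x, C (Y x) + D (∫ y, Y y ∂μ)⟫ ∂μ
      = ∫ x, ⟪C† (f x), Y x⟫ + ⟪D (∫ y, Y y ∂μ), f x⟫ ∂μ := by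
        congr 1 with x
        rw [inner_add_right, adjoint_inner_left, real_inner_comm (f x) (D _)]
    _ = (∫ x, ⟪C† (f x), Y x⟫ ∂μ) + ⟪D† (∫ y, f y ∂μ), ∫ y, Y y ∂μ⟫ := by
        rw [integral_add hCfY (hfi.const_inner _), integral_inner hfi, real_inner_comm,
          adjoint_inner_left]
    _ = ∫ x, ⟪C† (f x) + D† (∫ y, f y ∂μ), Y x⟫ ∂μ :=
        (integral_inner_add_const_left hCfY hYi _).symm

theorem integral_inner_meanField_meanField_eq_adjoint_comp [IsProbabilityMeasure μ] (A B C D : E →L[ℝ] F)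
    {X Y : α → E} (hX : MemLp X 2 μ) (hY : MemLp Y 2 μ) :
    ∫ x, ⟪A (X x) + B (∫ y, X y ∂μ), C (Y x) + D (∫ y, Y y ∂μ)⟫ ∂μ
      = ∫ x, ⟪(C† ∘L A) (X x) + (C† ∘L B + D† ∘L (A + B)) (∫ y, X y ∂μ), Y x⟫ ∂μ := by
  rw [integral_inner_meanField_eq_adjoint C D (memLp_meanField A B hX) hY,
    integral_meanField A B (hX.integrable one_le_two)]
  simp only [coe_comp, Function.comp_apply, add_apply, map_add, add_assoc]

end MeanField

theorem stmt4_general {n d : ℕ}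
    (m : Measure (EuclideanSpace ℝ (Fin n))) [IsProbabilityMeasure m]
    (T : ℝ)
    (F Fb M Mb MbS P Γ P' Γ' : ℝ → EuclideanSpace ℝ (Fin n) →L[ℝ] EuclideanSpace ℝ (Fin n))
    (MT MbT MbST : EuclideanSpace ℝ (Fin n) →L[ℝ] EuclideanSpace ℝ (Fin n))
    (G : ℝ → EuclideanSpace ℝ (Fin d) →L[ℝ] EuclideanSpace ℝ (Fin n))
    (Ninv : ℝ → EuclideanSpace ℝ (Fin d) →L[ℝ] EuclideanSpace ℝ (Fin d))
    (hPsym : ∀ s, (P s)† = P s) (hΓsym : ∀ s, (Γ s)† = Γ s)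
    -- P solves its Riccati equation with P(T) = M_T + M̄_T :
    (hPric : ∀ s, P' s + P s ∘L F s + (F s)† ∘L P s
        - P s ∘L G s ∘L Ninv s ∘L (G s)† ∘L P s + M s + Mb s = 0)
    (hPT : P T = MT + MbT)
    -- Γ solves its Riccati equation with Γ(T) = M̄_S(T) :
    (hΓric : ∀ s, Γ' s
        + Γ s ∘L (F s + Fb s - G s ∘L Ninv s ∘L (G s)† ∘L P s)
        + ((F s)† + (Fb s)† - P s ∘L G s ∘L Ninv s ∘L (G s)†) ∘L Γ s
        - Γ s ∘L G s ∘L Ninv s ∘L (G s)† ∘L Γ s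
        + MbS s + P s ∘L Fb s + (Fb s)† ∘L P s = 0)
    (hΓT : Γ T = MbST) :
    ∀ (s : ℝ) (X Y : EuclideanSpace ℝ (Fin n) → EuclideanSpace ℝ (Fin n)),
      MemLp X 2 m → MemLp Y 2 m →
      ((∫ x, ⟪P' s (X x) + Γ' s (∫ y, X y ∂m), Y x⟫ ∂m)
        + (∫ x, ⟪F s (X x) + Fb s (∫ y, X y ∂m),
              P s (Y x) + Γ s (∫ y, Y y ∂m)⟫ ∂m)
        + (∫ x, ⟪F s (Y x) + Fb s (∫ y, Y y ∂m),
              P s (X x) + Γ s (∫ y, X y ∂m)⟫ ∂m)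
        - (∫ x, ⟪Ninv s ((G s)† (P s (X x) + Γ s (∫ y, X y ∂m))),
              (G s)† (P s (Y x) + Γ s (∫ y, Y y ∂m))⟫ ∂m)
        + (∫ x, ⟪(M s + Mb s) (X x) + MbS s (∫ y, X y ∂m), Y x⟫ ∂m) = 0)
      ∧ (∫ x, ⟪P T (X x) + Γ T (∫ y, X y ∂m), Y x⟫ ∂m)
          = ∫ x, ⟪(MT + MbT) (X x) + MbST (∫ y, X y ∂m), Y x⟫ ∂m := by
  intro s X Y hX hY
  refine ⟨?_, by rw [hPT, hΓT]⟩
  have hFY : ∫ x, ⟪F s (Y x) + Fb s (∫ y, Y y ∂m), P s (X x) + Γ s (∫ y, X y ∂m)⟫ ∂m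
      = ∫ x, ⟪P s (X x) + Γ s (∫ y, X y ∂m), F s (Y x) + Fb s (∫ y, Y y ∂m)⟫ ∂m := by
    congr 1 with x
    exact real_inner_comm _ _
  have hGNG : ∫ x, ⟪Ninv s ((G s)† (P s (X x) + Γ s (∫ y, X y ∂m))),
        (G s)† (P s (Y x) + Γ s (∫ y, Y y ∂m))⟫ ∂m
      = ∫ x, ⟪(G s ∘L Ninv s ∘L (G s)† ∘L P s) (X x)
          + (G s ∘L Ninv s ∘L (G s)† ∘L Γ s) (∫ y, X y ∂m),
          P s (Y x) + Γ s (∫ y, Y y ∂m)⟫ ∂m := by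
    congr 1 with x
    rw [adjoint_inner_right]
    simp only [coe_comp, Function.comp_apply, map_add]
  rw [hFY, hGNG]
  simp only [integral_inner_meanField_meanField_eq_adjoint_comp _ _ _ _ hX hY, hPsym, hΓsym]
  rw [integral_inner_meanField_add _ _ _ _ hX hY, integral_inner_meanField_add _ _ _ _ hX hY,
    integral_inner_meanField_sub _ _ _ _ hX hY, integral_inner_meanField_add _ _ _ _ hX hY]
  have weak_zero : ∀ L K : EuclideanSpace ℝ (Fin n) →L[ℝ] EuclideanSpace ℝ (Fin n), L = 0 → K = 0 →
      ∫ x, ⟪L (X x) + K (∫ y, X y ∂m), Y x⟫ ∂m = 0 := by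
    rintro L K rfl rfl
    simp
  refine weak_zero _ _ ?_ ?_
  · rw [← hPric s]
    abel
  · rw [← hΓric s]
    simp only [comp_add, add_comp, comp_sub, sub_comp, comp_assoc]
    abel

/-- the operator `(𝒫(s)X)_x = P(s)X_x + Γ(s)X̄` on `H = L²_m(ℝⁿ,ℝⁿ)`,
built from the solutions `P`, `Γ` of the two matrix Riccati equations, solves the
operator Riccati equation `𝒫' + 𝒫ℱ + ℱ*𝒫 − 𝒫GN⁻¹G*𝒫 + ℳ = 0`, `𝒫(T) = ℳ_T`, in
the weak sense `(𝒫'X,Y)_H + (ℱX,𝒫Y)_H + (ℱY,𝒫X)_H − (N⁻¹G*𝒫X, G*𝒫Y)_U + (ℳX,Y)_H = 0`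
for all `X, Y ∈ H`. -/
theorem stmt4 {n d : ℕ}
    (m : Measure (EuclideanSpace ℝ (Fin n))) [IsProbabilityMeasure m]
    (T : ℝ)
    (F Fb M Mb MbS P Γ P' Γ' : ℝ → EuclideanSpace ℝ (Fin n) →L[ℝ] EuclideanSpace ℝ (Fin n))
    (MT MbT MbST : EuclideanSpace ℝ (Fin n) →L[ℝ] EuclideanSpace ℝ (Fin n))
    (G : ℝ → EuclideanSpace ℝ (Fin d) →L[ℝ] EuclideanSpace ℝ (Fin n))
    (N Ninv : ℝ → EuclideanSpace ℝ (Fin d) →L[ℝ] EuclideanSpace ℝ (Fin d))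
    (hNinv : ∀ s, N s ∘L Ninv s = 1 ∧ Ninv s ∘L N s = 1)
    (hNinvsym : ∀ s, (Ninv s)† = Ninv s)
    (hPsym : ∀ s, (P s)† = P s) (hΓsym : ∀ s, (Γ s)† = Γ s)
    -- P solves its Riccati equation with P(T) = M_T + M̄_T :
    (hP : ∀ s, HasDerivAt P (P' s) s)
    (hPric : ∀ s, P' s + P s ∘L F s + (F s)† ∘L P s
        - P s ∘L G s ∘L Ninv s ∘L (G s)† ∘L P s + M s + Mb s = 0)
    (hPT : P T = MT + MbT)
    -- Γ solves its Riccati equation with Γ(T) = M̄_S(T) :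
    (hΓ : ∀ s, HasDerivAt Γ (Γ' s) s)
    (hΓric : ∀ s, Γ' s
        + Γ s ∘L (F s + Fb s - G s ∘L Ninv s ∘L (G s)† ∘L P s)
        + ((F s)† + (Fb s)† - P s ∘L G s ∘L Ninv s ∘L (G s)†) ∘L Γ s
        - Γ s ∘L G s ∘L Ninv s ∘L (G s)† ∘L Γ s
        + MbS s + P s ∘L Fb s + (Fb s)† ∘L P s = 0)
    (hΓT : Γ T = MbST) :
    ∀ (s : ℝ) (X Y : EuclideanSpace ℝ (Fin n) → EuclideanSpace ℝ (Fin n)),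
      MemLp X 2 m → MemLp Y 2 m →
      ((∫ x, ⟪P' s (X x) + Γ' s (∫ y, X y ∂m), Y x⟫ ∂m)
        + (∫ x, ⟪F s (X x) + Fb s (∫ y, X y ∂m),
              P s (Y x) + Γ s (∫ y, Y y ∂m)⟫ ∂m)
        + (∫ x, ⟪F s (Y x) + Fb s (∫ y, Y y ∂m),
              P s (X x) + Γ s (∫ y, X y ∂m)⟫ ∂m)
        - (∫ x, ⟪Ninv s ((G s)† (P s (X x) + Γ s (∫ y, X y ∂m))),
              (G s)† (P s (Y x) + Γ s (∫ y, Y y ∂m))⟫ ∂m)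
        + (∫ x, ⟪(M s + Mb s) (X x) + MbS s (∫ y, X y ∂m), Y x⟫ ∂m) = 0)
      ∧ (∫ x, ⟪P T (X x) + Γ T (∫ y, X y ∂m), Y x⟫ ∂m)
          = ∫ x, ⟪(MT + MbT) (X x) + MbST (∫ y, X y ∂m), Y x⟫ ∂m :=
  stmt4_general m T F Fb M Mb MbS P Γ P' Γ' MT MbT MbST G Ninv hPsym hΓsym hPric hPT hΓric hΓT
end

section
/- Let π, m be probability measures on ℝⁿ such that π is absolutely continuous with respect to m, and define Φ(m) = KL(π|m). Then the functional derivative of Φ at m is (d/dm)Φ(m)(x) = −(dπ/dm)(x), i.e., for m' with π ≪ m + λ(m'−m) for all λ ∈ [0,1] and suitable integrability, Φ(m') − Φ(m) = −∫₀¹ ∫ (dπ/d(m+λ(m'−m)))(x) (dm'(x) − dm(x)) dλ. -/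
/-!
Write `f = dm/dπ` and `g = dm'/dπ`. The mixture `m_λ = (1 - λ) m + λ m'` has density
`(1 - λ) f + λ g` with respect to `π`, so `dπ/dm_λ = 1 / ((1 - λ) f + λ g)` and the inner
integral against `m' - m` is `∫ (g - f) / ((1 - λ) f + λ g) dπ`. The integrand is the
`λ`-derivative of `log ((1 - λ) f + λ g)`; the bounds `c ≤ f, g ≤ C` justify Fubini, so the
double integral is `∫ (log g - log f) dπ`, while `log (dπ/dm) = -log f` on the left.
-/

open MeasureTheory Set
open scoped ENNReal

section LineIntegral

lemma le_one_sub_mul_add_mul {a b c l : ℝ} (ha : c ≤ a) (hb : c ≤ b) (hl : l ∈ Icc (0:ℝ) 1) :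
    c ≤ (1 - l) * a + l * b := by
  nlinarith [mul_nonneg (sub_nonneg.2 hl.2) (sub_nonneg.2 ha), mul_nonneg hl.1 (sub_nonneg.2 hb)]

lemma intervalIntegral_div_one_sub_mul_add_mul {a b : ℝ} (ha : 0 < a) (hb : 0 < b) :
    ∫ l in (0:ℝ)..1, (b - a) / ((1 - l) * a + l * b) = Real.log b - Real.log a := by
  have hpos : ∀ l ∈ uIcc (0:ℝ) 1, 0 < (1 - l) * a + l * b := fun l hl ↦
    (lt_min ha hb).trans_le <| le_one_sub_mul_add_mul (min_le_left a b) (min_le_right a b)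
      (by rwa [uIcc_of_le zero_le_one] at hl)
  have hderiv : ∀ l ∈ uIcc (0:ℝ) 1, HasDerivAt (fun l ↦ Real.log ((1 - l) * a + l * b))
      ((b - a) / ((1 - l) * a + l * b)) l := fun l hl ↦ by
    have hlin : HasDerivAt (fun l : ℝ ↦ (1 - l) * a + l * b) (b - a) l :=
      ((((hasDerivAt_id l).const_sub 1).mul_const a).add
        ((hasDerivAt_id l).mul_const b)).congr_deriv (by ring)
    exact hlin.log (hpos l hl).ne'
  have hcont : ContinuousOn (fun l ↦ (b - a) / ((1 - l) * a + l * b)) (uIcc 0 1) :=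
    continuousOn_const.div (by fun_prop) fun l hl ↦ (hpos l hl).ne'
  rw [intervalIntegral.integral_eq_sub_of_hasDerivAt hderiv hcont.intervalIntegrable]
  norm_num

lemma abs_div_one_sub_mul_add_mul_le {a b c C l : ℝ} (hc : 0 < c) (ha : a ∈ Icc c C)
    (hb : b ∈ Icc c C) (hl : l ∈ Icc (0:ℝ) 1) :
    |(b - a) / ((1 - l) * a + l * b)| ≤ (C - c) / c := by
  have hden := le_one_sub_mul_add_mul ha.1 hb.1 hl
  rw [abs_div, abs_of_pos (hc.trans_le hden)]
  exact div_le_div₀ (by linarith [ha.1, ha.2]) (abs_sub_le_iff.2 ⟨by linarith [ha.1, hb.2],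
    by linarith [ha.2, hb.1]⟩) hc hden

end LineIntegral

section Density

variable {α : Type*} [MeasurableSpace α] {π μ ν : Measure α}

lemma ae_toReal_mem_Icc {u : α → ℝ≥0∞} {c C : ℝ≥0∞} (hC : C ≠ ∞)
    (h : ∀ᵐ x ∂π, c ≤ u x ∧ u x ≤ C) : ∀ᵐ x ∂π, (u x).toReal ∈ Icc c.toReal C.toReal :=
  h.mono fun _ hx ↦
    ⟨ENNReal.toReal_mono (hx.2.trans_lt hC.lt_top).ne hx.1, ENNReal.toReal_mono hC hx.2⟩

lemma smul_add_smul_eq_withDensity [SigmaFinite π] [SigmaFinite μ] [SigmaFinite ν]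
    (hμ : μ ≪ π) (hν : ν ≪ π) (a b : ℝ≥0∞) :
    a • μ + b • ν = π.withDensity (a • μ.rnDeriv π + b • ν.rnDeriv π) := by
  rw [withDensity_add_left ((μ.measurable_rnDeriv π).const_smul a),
    withDensity_smul a (μ.measurable_rnDeriv π), withDensity_smul b (ν.measurable_rnDeriv π),
    μ.withDensity_rnDeriv_eq π hμ, ν.withDensity_rnDeriv_eq π hν]

lemma toReal_rnDeriv_smul_add_smul [SigmaFinite π] [SigmaFinite μ] [SigmaFinite ν]
    (hμ : μ ≪ π) (hν : ν ≪ π) {s t : ℝ} (hs : 0 ≤ s) (ht : 0 ≤ t) :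
    ∀ᵐ x ∂π, ((ENNReal.ofReal s • μ + ENNReal.ofReal t • ν).rnDeriv π x).toReal
      = s * (μ.rnDeriv π x).toReal + t * (ν.rnDeriv π x).toReal := by
  rw [smul_add_smul_eq_withDensity hμ hν]
  filter_upwards [Measure.rnDeriv_withDensity π
      (((μ.measurable_rnDeriv π).const_smul (ENNReal.ofReal s)).add
        ((ν.measurable_rnDeriv π).const_smul (ENNReal.ofReal t))),
    μ.rnDeriv_ne_top π, ν.rnDeriv_ne_top π] with x hρ hμ_top hν_top
  rw [hρ, Pi.add_apply, Pi.smul_apply, Pi.smul_apply, smul_eq_mul, smul_eq_mul,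
    ENNReal.toReal_add (ENNReal.mul_ne_top ENNReal.ofReal_ne_top hμ_top)
      (ENNReal.mul_ne_top ENNReal.ofReal_ne_top hν_top), ENNReal.toReal_mul, ENNReal.toReal_mul,
    ENNReal.toReal_ofReal hs, ENNReal.toReal_ofReal ht]

lemma integral_log_toReal_rnDeriv_eq_neg [SigmaFinite π] [SigmaFinite μ] (hπμ : π ≪ μ) :
    ∫ x, Real.log (π.rnDeriv μ x).toReal ∂π = -∫ x, Real.log (μ.rnDeriv π x).toReal ∂π := by
  rw [← integral_neg]
  refine integral_congr_ae ?_
  filter_upwards [Measure.inv_rnDeriv' hπμ] with x hx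
  simp [← hx, ENNReal.toReal_inv, Real.log_inv]

lemma integral_sub_integral_eq_integral_rnDeriv_sub [SigmaFinite π] [SigmaFinite μ]
    [SigmaFinite ν] (hμ : μ ≪ π) (hν : ν ≪ π)
    {h : α → ℝ} (hμh : Integrable h μ) (hνh : Integrable h ν) :
    ∫ x, h x ∂ν - ∫ x, h x ∂μ
      = ∫ x, ((ν.rnDeriv π x).toReal - (μ.rnDeriv π x).toReal) * h x ∂π := by
  rw [← integral_toReal_rnDeriv_mul hν, ← integral_toReal_rnDeriv_mul hμ,
    ← integral_sub ((integrable_toReal_rnDeriv_mul_iff hν).2 hνh)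
      ((integrable_toReal_rnDeriv_mul_iff hμ).2 hμh)]
  simp only [sub_mul]

lemma integral_toReal_rnDeriv_smul_add_smul_sub [SigmaFinite π] [IsFiniteMeasure μ]
    [IsFiniteMeasure ν] (hμ : μ ≪ π) (hν : ν ≪ π) {c : ℝ} (hc : 0 < c)
    (hμc : ∀ᵐ x ∂π, c ≤ (μ.rnDeriv π x).toReal) (hνc : ∀ᵐ x ∂π, c ≤ (ν.rnDeriv π x).toReal)
    {l : ℝ} (hl : l ∈ Icc (0:ℝ) 1)
    (hπ : π ≪ ENNReal.ofReal (1 - l) • μ + ENNReal.ofReal l • ν) :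
    ∫ x, (π.rnDeriv (ENNReal.ofReal (1 - l) • μ + ENNReal.ofReal l • ν) x).toReal ∂ν
      - ∫ x, (π.rnDeriv (ENNReal.ofReal (1 - l) • μ + ENNReal.ofReal l • ν) x).toReal ∂μ
      = ∫ x, ((ν.rnDeriv π x).toReal - (μ.rnDeriv π x).toReal)
          / ((1 - l) * (μ.rnDeriv π x).toReal + l * (ν.rnDeriv π x).toReal) ∂π := by
  set ρ := ENNReal.ofReal (1 - l) • μ + ENNReal.ofReal l • ν
  have : IsFiniteMeasure ρ := ⟨by simp [ρ, ENNReal.mul_lt_top, measure_lt_top]⟩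
  have hdens : ∀ᵐ x ∂π, (π.rnDeriv ρ x).toReal
      = ((1 - l) * (μ.rnDeriv π x).toReal + l * (ν.rnDeriv π x).toReal)⁻¹ := by
    filter_upwards [Measure.inv_rnDeriv' hπ,
      toReal_rnDeriv_smul_add_smul hμ hν (sub_nonneg.2 hl.2) hl.1] with x hinv hρ
    rw [← hinv, Pi.inv_apply, ENNReal.toReal_inv, hρ]
  have hbound : ∀ᵐ x ∂π, ‖(π.rnDeriv ρ x).toReal‖ ≤ c⁻¹ := by
    filter_upwards [hdens, hμc, hνc] with x hx hμx hνx
    have hden := le_one_sub_mul_add_mul hμx hνx hl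
    rw [hx, norm_inv, Real.norm_of_nonneg (hc.le.trans hden)]
    exact inv_anti₀ hc hden
  have hmeas : Measurable fun x ↦ (π.rnDeriv ρ x).toReal :=
    (π.measurable_rnDeriv ρ).ennreal_toReal
  rw [integral_sub_integral_eq_integral_rnDeriv_sub hμ hν
    (.of_bound hmeas.aestronglyMeasurable _ (hμ.ae_le hbound))
    (.of_bound hmeas.aestronglyMeasurable _ (hν.ae_le hbound))]
  refine integral_congr_ae ?_
  filter_upwards [hdens] with x hx
  rw [hx, div_eq_mul_inv]

end Density

section Fubini

variable {α : Type*} [MeasurableSpace α] {π : Measure α} [IsFiniteMeasure π]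
  {F G : α → ℝ} {c C : ℝ}

lemma integrable_log_of_ae_mem_Icc (hF : Measurable F) (hc : 0 < c)
    (hFb : ∀ᵐ x ∂π, F x ∈ Icc c C) : Integrable (fun x ↦ Real.log (F x)) π :=
  .of_bound (Real.measurable_log.comp hF).aestronglyMeasurable (max |Real.log c| |Real.log C|) <| by
    filter_upwards [hFb] with x hx
    exact abs_le_max_abs_abs (Real.log_le_log hc hx.1) (Real.log_le_log (hc.trans_le hx.1) hx.2)

lemma intervalIntegral_integral_div_one_sub_mul_add_mul (hF : Measurable F) (hG : Measurable G)
    (hc : 0 < c) (hFb : ∀ᵐ x ∂π, F x ∈ Icc c C) (hGb : ∀ᵐ x ∂π, G x ∈ Icc c C) :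
    ∫ l in (0:ℝ)..1, ∫ x, (G x - F x) / ((1 - l) * F x + l * G x) ∂π
      = ∫ x, Real.log (G x) ∂π - ∫ x, Real.log (F x) ∂π := by
  have hint : Integrable (Function.uncurry fun l x ↦ (G x - F x) / ((1 - l) * F x + l * G x))
      ((volume.restrict (Ioc (0:ℝ) 1)).prod π) := by
    have hmeas : Measurable (Function.uncurry fun l x ↦ (G x - F x) / ((1 - l) * F x + l * G x)) :=
      Measurable.div (by fun_prop) (by fun_prop)
    refine .of_bound hmeas.aestronglyMeasurable ((C - c) / c) ?_
    filter_upwards [Measure.quasiMeasurePreserving_fst.ae (ae_restrict_mem measurableSet_Ioc),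
      Measure.quasiMeasurePreserving_snd.ae hFb, Measure.quasiMeasurePreserving_snd.ae hGb]
      with p hl hFp hGp
    exact abs_div_one_sub_mul_add_mul_le hc hFp hGp (Ioc_subset_Icc_self hl)
  rw [intervalIntegral_integral_swap (by rwa [uIoc_of_le zero_le_one]),
    ← integral_sub (integrable_log_of_ae_mem_Icc hG hc hGb)
      (integrable_log_of_ae_mem_Icc hF hc hFb)]
  refine integral_congr_ae ?_
  filter_upwards [hFb, hGb] with x hFx hGx
  exact intervalIntegral_div_one_sub_mul_add_mul (hc.trans_le hFx.1) (hc.trans_le hGx.1)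

end Fubini

/-- for `Φ(m) = KL(π|m) = ∫ ln(dπ/dm) dπ`, the functional derivative
is `−dπ/dm`, i.e. (with densities bounded above and away from zero)
`Φ(m') − Φ(m) = −∫₀¹ ∫ (dπ/d(m+λ(m'−m))) d(m'−m) dλ`. -/
theorem stmt12 {n : ℕ}
    (π m m' : Measure (EuclideanSpace ℝ (Fin n)))
    [IsProbabilityMeasure π] [IsProbabilityMeasure m] [IsProbabilityMeasure m']
    (hπm : π ≪ m) (hπm' : π ≪ m')
    (hm : m ≪ π) (hm' : m' ≪ π)
    (c C : ℝ≥0∞) (hc : 0 < c) (hC : C < ⊤)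
    (hmd : ∀ᵐ x ∂π, c ≤ m.rnDeriv π x ∧ m.rnDeriv π x ≤ C)
    (hm'd : ∀ᵐ x ∂π, c ≤ m'.rnDeriv π x ∧ m'.rnDeriv π x ≤ C) :
    (∫ x, Real.log ((π.rnDeriv m' x).toReal) ∂π)
      - (∫ x, Real.log ((π.rnDeriv m x).toReal) ∂π)
    = -∫ l in (0:ℝ)..1,
        ((∫ x, ((π.rnDeriv (ENNReal.ofReal (1 - l) • m + ENNReal.ofReal l • m') x).toReal) ∂m')
          - ∫ x, ((π.rnDeriv (ENNReal.ofReal (1 - l) • m + ENNReal.ofReal l • m') x).toReal) ∂m) := by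
  obtain ⟨x₀, hx₀⟩ := hmd.exists
  have hc_pos : 0 < c.toReal := ENNReal.toReal_pos hc.ne' (hx₀.1.trans_lt (hx₀.2.trans_lt hC)).ne
  have hmb := ae_toReal_mem_Icc hC.ne hmd
  have hm'b := ae_toReal_mem_Icc hC.ne hm'd
  have hinner : ∀ l ∈ uIoc (0:ℝ) 1,
      (∫ x, (π.rnDeriv (ENNReal.ofReal (1 - l) • m + ENNReal.ofReal l • m') x).toReal ∂m')
        - ∫ x, (π.rnDeriv (ENNReal.ofReal (1 - l) • m + ENNReal.ofReal l • m') x).toReal ∂m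
      = ∫ x, ((m'.rnDeriv π x).toReal - (m.rnDeriv π x).toReal)
          / ((1 - l) * (m.rnDeriv π x).toReal + l * (m'.rnDeriv π x).toReal) ∂π := by
    intro l hl
    rw [uIoc_of_le zero_le_one] at hl
    exact integral_toReal_rnDeriv_smul_add_smul_sub hm hm' hc_pos (hmb.mono fun _ h ↦ h.1)
      (hm'b.mono fun _ h ↦ h.1) (Ioc_subset_Icc_self hl)
      ((hπm'.smul_right (by simpa using hl.1)).add_right' _)
  rw [integral_log_toReal_rnDeriv_eq_neg hπm, integral_log_toReal_rnDeriv_eq_neg hπm',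
    intervalIntegral.integral_congr_ae (.of_forall hinner),
    intervalIntegral_integral_div_one_sub_mul_add_mul (m.measurable_rnDeriv π).ennreal_toReal
      (m'.measurable_rnDeriv π).ennreal_toReal hc_pos hmb hm'b]
  ring
end

section
/- Let Ψ_{F,P}(s,t) and Ψ_{F,Σ}(s,t) be the evolution operators on ℝⁿ associated with F(s) − G(s)N⁻¹(s)G*(s)P(s) and F(s)+F̄(s)−G(s)N⁻¹(s)G*(s)Σ(s) respectively, where Σ = P + Γ. Then the evolution operator Φ_{ℱ,𝒫}(s,t) on H = L²_m(ℝⁿ,ℝⁿ) associated with ℱ(s) − G(s)N⁻¹(s)G*(s)𝒫(s), where (ℱX)_x = FX_x + F̄X̄ and (𝒫X)_x = PX_x + ΓX̄, satisfies (Φ_{ℱ,𝒫}(s,t)X)_x = Ψ_{F,P}(s,t)X_x + (Ψ_{F,Σ}(s,t) − Ψ_{F,P}(s,t))X̄. -/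
/-!
Split a state `Y` into its fluctuation `Y - Ȳ` and its mean `Ȳ`. The mean-field generator
`ℱ - GN⁻¹G*𝒫` acts on the fluctuation as `F - GN⁻¹G*P` and on the mean as
`F + F̄ - GN⁻¹G*Σ`, so the fluctuation is transported by `Ψ_{F,P}` and the mean by `Ψ_{F,Σ}`.
Since `Ψ_{F,P}` and `Ψ_{F,Σ}` are linear, integrating against the probability measure `m`
commutes with them, which identifies the mean of the candidate solution.
-/

open MeasureTheory

local postfix:1024 "†" => ContinuousLinearMap.adjoint

section Generator

variable {𝕜 E : Type*} [NontriviallyNormedField 𝕜] [NormedAddCommGroup E] [NormedSpace 𝕜 E]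

theorem meanField_generator_split (F Fb K P Γ : E →L[𝕜] E) (a b : E) :
    F (a + b) + Fb b - K (P (a + b) + Γ b)
      = (F - K ∘L P) a + (F + Fb - K ∘L (P + Γ)) b := by
  simp only [sub_apply, add_apply, ContinuousLinearMap.comp_apply, map_add]
  abel

theorem hasDerivAt_apply_add_sub_apply {Φ₁ Φ₂ : 𝕜 → E →L[𝕜] E} {A₁ A₂ : E →L[𝕜] E} {s : 𝕜}
    (h₁ : HasDerivAt Φ₁ (A₁ ∘L Φ₁ s) s) (h₂ : HasDerivAt Φ₂ (A₂ ∘L Φ₂ s) s) (v w : E) :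
    HasDerivAt (fun r => Φ₁ r v + (Φ₂ r - Φ₁ r) w)
      (A₁ (Φ₁ s v - Φ₁ s w) + A₂ (Φ₂ s w)) s := by
  refine ((h₁.clm_apply (hasDerivAt_const s v)).add
    ((h₂.sub h₁).clm_apply (hasDerivAt_const s w))).congr_deriv ?_
  simp only [map_zero, add_zero, sub_apply, ContinuousLinearMap.comp_apply, map_sub]
  abel

end Generator

theorem integral_clm_apply_add_const {α E F : Type*} [MeasurableSpace α] {m : Measure α}
    [IsProbabilityMeasure m] [NormedAddCommGroup E] [NormedSpace ℝ E] [CompleteSpace E]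
    [NormedAddCommGroup F] [NormedSpace ℝ F] [CompleteSpace F] (L : E →L[ℝ] F) (c : F) {X : α → E}
    (hX : Integrable X m) :
    ∫ x, (L (X x) + c) ∂m = L (∫ x, X x ∂m) + c := by
  rw [integral_add (L.integrable_comp hX) (integrable_const c), integral_const,
    L.integral_comp_comm hX, probReal_univ, one_smul]

/-- with `Ψ_{F,P}`, `Ψ_{F,Σ}` the evolution operators on `ℝⁿ` of
`F − GN⁻¹G*P` and `F + F̄ − GN⁻¹G*Σ` (`Σ = P + Γ`), the map
`(X,x) ↦ Ψ_{F,P}(s,t)X_x + (Ψ_{F,Σ}(s,t) − Ψ_{F,P}(s,t))X̄` is the evolution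
operator `Φ_{ℱ,𝒫}(s,t)` on `H = L²_m` of `ℱ − GN⁻¹G*𝒫`: it equals `X` at `s = t`,
its `m`-mean is `Ψ_{F,Σ}(s,t)X̄`, and it solves the `H`-valued ODE
`Y' = ℱY − GN⁻¹G*𝒫Y`, i.e. pointwise
`Y_x' = F Y_x + F̄ Ȳ − GN⁻¹G*(P Y_x + Γ Ȳ)`. -/
theorem stmt15 {n d : ℕ}
    (m : Measure (EuclideanSpace ℝ (Fin n))) [IsProbabilityMeasure m]
    (F Fb P Γ : ℝ → EuclideanSpace ℝ (Fin n) →L[ℝ] EuclideanSpace ℝ (Fin n))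
    (G : ℝ → EuclideanSpace ℝ (Fin d) →L[ℝ] EuclideanSpace ℝ (Fin n))
    (Ninv : ℝ → EuclideanSpace ℝ (Fin d) →L[ℝ] EuclideanSpace ℝ (Fin d))
    (Ψ1 Ψ2 : ℝ → ℝ → EuclideanSpace ℝ (Fin n) →L[ℝ] EuclideanSpace ℝ (Fin n))
    (hΨ1 : ∀ t s, HasDerivAt (fun r => Ψ1 r t)
        ((F s - G s ∘L Ninv s ∘L (G s)† ∘L P s) ∘L Ψ1 s t) s)
    (hΨ1id : ∀ r, Ψ1 r r = 1)
    (hΨ2 : ∀ t s, HasDerivAt (fun r => Ψ2 r t)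
        ((F s + Fb s - G s ∘L Ninv s ∘L (G s)† ∘L (P s + Γ s)) ∘L Ψ2 s t) s)
    (hΨ2id : ∀ r, Ψ2 r r = 1)
    (t : ℝ) (X : EuclideanSpace ℝ (Fin n) → EuclideanSpace ℝ (Fin n))
    (hX : Integrable X m) :
    (∀ x, Ψ1 t t (X x) + (Ψ2 t t - Ψ1 t t) (∫ y, X y ∂m) = X x) ∧
    (∀ s, (∫ x, (Ψ1 s t (X x) + (Ψ2 s t - Ψ1 s t) (∫ y, X y ∂m)) ∂m)
        = Ψ2 s t (∫ y, X y ∂m)) ∧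
    (∀ x s, HasDerivAt
      (fun r => Ψ1 r t (X x) + (Ψ2 r t - Ψ1 r t) (∫ y, X y ∂m))
      (F s (Ψ1 s t (X x) + (Ψ2 s t - Ψ1 s t) (∫ y, X y ∂m))
        + Fb s (Ψ2 s t (∫ y, X y ∂m))
        - (G s ∘L Ninv s ∘L (G s)†)
            (P s (Ψ1 s t (X x) + (Ψ2 s t - Ψ1 s t) (∫ y, X y ∂m))
              + Γ s (Ψ2 s t (∫ y, X y ∂m)))) s) := by
  set Xbar := ∫ y, X y ∂m
  refine ⟨fun x => by simp [hΨ1id, hΨ2id], fun s => ?_, fun x s => ?_⟩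
  · rw [integral_clm_apply_add_const _ _ hX, sub_apply, add_sub_cancel]
  · have hsplit : Ψ1 s t (X x) + (Ψ2 s t - Ψ1 s t) Xbar
        = (Ψ1 s t (X x) - Ψ1 s t Xbar) + Ψ2 s t Xbar := by
      rw [sub_apply]
      abel
    rw [hsplit, meanField_generator_split]
    exact hasDerivAt_apply_add_sub_apply (hΨ1 t s) (hΨ2 t s) (X x) Xbar
end
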